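/- arXiv:2602.14631 — 6 statements merged into one kernel-verified Lean document; each statement's English description precedes it below -/
import Mathlib

section
/- Let u : ℝ≥0 → ℝ be strictly quasiconcave and attain its maximum at a unique point x⋆ ∈ ℝ≥0, let c₁ : ℝ≥0 → ℝ≥0 be strictly increasing, and let x_s ∈ ℝ≥0 with x_s ≠ x⋆. Then the set of maximal elements of the one-many ordering ≽ on the nonnegative reals equals the closed interval [min{x_s, x⋆}, max{x_s, x⋆}]. -/
open NNReal Set

/-- Strict quasiconcavity of a function `u : ℝ≥0 → ℝ`:
for all distinct `x, y` and all `λ ∈ (0,1)`, `u (λx + (1-λ)y) > min (u x) (u y)`. -/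
def StrictQuasiconcave (u : ℝ≥0 → ℝ) : Prop :=
  ∀ x y : ℝ≥0, x ≠ y → ∀ l : ℝ≥0, 0 < l → l < 1 →
    min (u x) (u y) < u (l * x + (1 - l) * y)

/-- The one-many ordering `x ≽ y` on `ℝ≥0`, given personal utility `u`,
cost `c₁` of current social distance, and social reference point `xs`. -/
def OneMany (u : ℝ≥0 → ℝ) (c₁ : ℝ≥0 → ℝ≥0) (xs : ℝ≥0) (x y : ℝ≥0) : Prop :=
  u y ≤ u x ∧ c₁ (nndist x xs) ≤ c₁ (nndist y xs)

/-- The strict part `x ≻ y` of the one-many ordering. -/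
def OneManyStrict (u : ℝ≥0 → ℝ) (c₁ : ℝ≥0 → ℝ≥0) (xs : ℝ≥0) (x y : ℝ≥0) : Prop :=
  OneMany u c₁ xs x y ∧ ¬ OneMany u c₁ xs y x

/-- The set `max(ℝ≥0, ≽)` of maximal elements of the one-many ordering:
the agent's consideration set. -/
def maxSet (u : ℝ≥0 → ℝ) (c₁ : ℝ≥0 → ℝ≥0) (xs : ℝ≥0) : Set ℝ≥0 :=
  {x : ℝ≥0 | ¬ ∃ y : ℝ≥0, OneManyStrict u c₁ xs y x}

lemma nndist_le_nndist_iff (a b c d : ℝ≥0) :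
    nndist a b ≤ nndist c d ↔ |(a:ℝ) - b| ≤ |(c:ℝ) - d| := by
  rw [← NNReal.coe_le_coe]; rfl

lemma exists_combo {a b c : ℝ≥0} (h1 : a < b) (h2 : b < c) :
    ∃ l : ℝ≥0, 0 < l ∧ l < 1 ∧ l * a + (1 - l) * c = b := by
  have hac : a < c := h1.trans h2
  have h1' : (a:ℝ) < b := h1
  have h2' : (b:ℝ) < c := h2
  have hne : (c:ℝ) - a ≠ 0 := by linarith
  refine ⟨(c - b) / (c - a), ?_, ?_, ?_⟩
  · rw [← NNReal.coe_lt_coe]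
    push_cast [NNReal.coe_sub h2.le, NNReal.coe_sub hac.le]
    apply div_pos <;> linarith
  · rw [← NNReal.coe_lt_coe]
    push_cast [NNReal.coe_sub h2.le, NNReal.coe_sub hac.le]
    rw [div_lt_one (by linarith)]
    linarith
  · have hl1 : (c - b) / (c - a) ≤ 1 := by
      rw [← NNReal.coe_le_coe]
      push_cast [NNReal.coe_sub h2.le, NNReal.coe_sub hac.le]
      rw [div_le_one (by linarith)]
      linarith
    rw [← NNReal.coe_inj]
    push_cast [NNReal.coe_sub h2.le, NNReal.coe_sub hac.le, NNReal.coe_sub hl1]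
    field_simp [hne]
    ring

lemma exists_combo' {a b c : ℝ≥0} (h1 : c < b) (h2 : b < a) :
    ∃ l : ℝ≥0, 0 < l ∧ l < 1 ∧ l * a + (1 - l) * c = b := by
  obtain ⟨l, h0, hl1, he⟩ := exists_combo h1 h2
  refine ⟨1 - l, tsub_pos_of_lt hl1, tsub_lt_self one_pos h0, ?_⟩
  rw [tsub_tsub_cancel_of_le hl1.le, add_comm]
  exact he

lemma aux_lt_star {u : ℝ≥0 → ℝ} {xstar : ℝ≥0}
    (hmax : ∀ y : ℝ≥0, u y ≤ u xstar)
    (huniq : ∀ y : ℝ≥0, (∀ z : ℝ≥0, u z ≤ u y) → y = xstar)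
    {a : ℝ≥0} (ha : a ≠ xstar) : u a < u xstar := by
  rcases lt_or_eq_of_le (hmax a) with h | h
  · exact h
  · exact absurd (huniq a (fun z => h ▸ hmax z)) ha

lemma aux_between {u : ℝ≥0 → ℝ} {xstar : ℝ≥0}
    (hu : StrictQuasiconcave u) (hmax : ∀ y : ℝ≥0, u y ≤ u xstar)
    {a b : ℝ≥0} (ha : a ≠ xstar)
    (h : (a < b ∧ b < xstar) ∨ (xstar < b ∧ b < a)) : u a < u b := by
  obtain ⟨l, h0, h1, he⟩ :
      ∃ l : ℝ≥0, 0 < l ∧ l < 1 ∧ l * a + (1 - l) * xstar = b := by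
    rcases h with ⟨h1, h2⟩ | ⟨h1, h2⟩
    · exact exists_combo h1 h2
    · exact exists_combo' h1 h2
  have := hu a xstar ha l h0 h1
  rwa [he, min_eq_left (hmax a)] at this

theorem maxSet_eq_Icc_of_ne
    (u : ℝ≥0 → ℝ) (c₁ : ℝ≥0 → ℝ≥0) (xstar xs : ℝ≥0)
    (hu : StrictQuasiconcave u)
    (hmax : ∀ y : ℝ≥0, u y ≤ u xstar)
    (huniq : ∀ y : ℝ≥0, (∀ z : ℝ≥0, u z ≤ u y) → y = xstar)
    (hc : StrictMono c₁)
    (hxs : xs ≠ xstar) :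
    maxSet u c₁ xs = Icc (min xs xstar) (max xs xstar) := by
  ext x
  simp only [maxSet, mem_setOf_eq, mem_Icc]
  constructor
  · -- maximal → in the interval
    intro hx
    by_contra hI
    apply hx
    rw [not_and_or, not_le, not_le] at hI
    rcases hI with hlt | hgt
    · -- x < min xs xstar : the min dominates x
      have hkey : u x < u (min xs xstar) := by
        rcases le_or_gt xs xstar with h | h
        · have hxslt : xs < xstar := lt_of_le_of_ne h hxs
          have hx' : x < xs := by rwa [min_eq_left h] at hlt
          rw [min_eq_left h]
          exact aux_between hu hmax (ne_of_lt (hx'.trans hxslt)) (Or.inl ⟨hx', hxslt⟩)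
        · have hx' : x < xstar := by rwa [min_eq_right h.le] at hlt
          rw [min_eq_right h.le]
          exact aux_lt_star hmax huniq (ne_of_lt hx')
      refine ⟨min xs xstar, ⟨hkey.le, ?_⟩, fun h => absurd h.1 (not_le.mpr hkey)⟩
      apply hc.monotone
      rw [nndist_le_nndist_iff]
      have h1 : (x:ℝ) < (min xs xstar : ℝ≥0) := NNReal.coe_lt_coe.mpr hlt
      have h2 : ((min xs xstar : ℝ≥0) : ℝ) ≤ xs := NNReal.coe_le_coe.mpr (min_le_left xs xstar)
      rw [abs_sub_comm, abs_sub_comm (x:ℝ), abs_of_nonneg (by linarith),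
        abs_of_nonneg (by linarith)]
      linarith
    · -- max xs xstar < x : the max dominates x
      have hkey : u x < u (max xs xstar) := by
        rcases le_or_gt xstar xs with h | h
        · have hxslt : xstar < xs := lt_of_le_of_ne h hxs.symm
          have hx' : xs < x := by rwa [max_eq_left h] at hgt
          rw [max_eq_left h]
          exact aux_between hu hmax (ne_of_gt (hxslt.trans hx')) (Or.inr ⟨hxslt, hx'⟩)
        · have hx' : xstar < x := by rwa [max_eq_right h.le] at hgt
          rw [max_eq_right h.le]
          exact aux_lt_star hmax huniq (ne_of_gt hx')
      refine ⟨max xs xstar, ⟨hkey.le, ?_⟩, fun h => absurd h.1 (not_le.mpr hkey)⟩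
      apply hc.monotone
      rw [nndist_le_nndist_iff]
      have h1 : ((max xs xstar : ℝ≥0) : ℝ) < x := NNReal.coe_lt_coe.mpr hgt
      have h2 : (xs:ℝ) ≤ (max xs xstar : ℝ≥0) := NNReal.coe_le_coe.mpr (le_max_left xs xstar)
      rw [abs_of_nonneg (by linarith), abs_of_nonneg (by linarith)]
      linarith
  · -- in interval → maximal
    rintro ⟨hxm, hxM⟩ ⟨y, ⟨hu1, hd1⟩, hn⟩
    apply hn
    have hd : |(y:ℝ) - xs| ≤ |(x:ℝ) - xs| :=
      (nndist_le_nndist_iff y xs x xs).mp (hc.le_iff_le.mp hd1)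
    have hyx : y = x := by
      by_contra hne
      rcases le_or_gt xs xstar with h | h
      · -- xs ≤ x ≤ xstar
        have hxsx : xs ≤ x := (min_eq_left h) ▸ hxm
        have hxst : x ≤ xstar := (max_eq_right h) ▸ hxM
        have hxsx' : (xs:ℝ) ≤ x := NNReal.coe_le_coe.mpr hxsx
        have habs : |(x:ℝ) - xs| = (x:ℝ) - xs := abs_of_nonneg (by linarith)
        have hy : (y:ℝ) - xs ≤ (x:ℝ) - xs := le_trans (le_abs_self _) (habs ▸ hd)
        have hylt : y < x :=
          lt_of_le_of_ne (NNReal.coe_le_coe.mp (by linarith)) hne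
        rcases eq_or_lt_of_le hxst with hexx | hexx
        · subst hexx
          exact absurd (aux_lt_star hmax huniq (ne_of_lt hylt)) (not_lt.mpr hu1)
        · exact absurd (aux_between hu hmax (ne_of_lt (hylt.trans hexx))
            (Or.inl ⟨hylt, hexx⟩)) (not_lt.mpr hu1)
      · -- xstar ≤ x ≤ xs
        have hxsx : x ≤ xs := (max_eq_left h.le) ▸ hxM
        have hxst : xstar ≤ x := (min_eq_right h.le) ▸ hxm
        have hxsx' : (x:ℝ) ≤ xs := NNReal.coe_le_coe.mpr hxsx
        have habs : |(x:ℝ) - xs| = (xs:ℝ) - x := by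
          rw [abs_sub_comm]; exact abs_of_nonneg (by linarith)
        have hy : (xs:ℝ) - y ≤ (xs:ℝ) - x := by
          rw [habs] at hd
          calc (xs:ℝ) - y ≤ |(xs:ℝ) - y| := le_abs_self _
            _ = |(y:ℝ) - xs| := abs_sub_comm _ _
            _ ≤ _ := hd
        have hylt : x < y :=
          lt_of_le_of_ne (NNReal.coe_le_coe.mp (by linarith)) (Ne.symm hne)
        rcases eq_or_lt_of_le hxst with hexx | hexx
        · rw [← hexx] at hu1 hylt
          exact absurd (aux_lt_star hmax huniq (ne_of_gt hylt)) (not_lt.mpr hu1)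
        · exact absurd (aux_between hu hmax (ne_of_gt (hexx.trans hylt))
            (Or.inr ⟨hexx, hylt⟩)) (not_lt.mpr hu1)
    subst hyx
    exact ⟨le_refl _, le_refl _⟩
end

section
/- Let u : ℝ≥0 → ℝ be strictly quasiconcave and attain its maximum at a unique point x⋆ ∈ ℝ≥0, let c₁ : ℝ≥0 → ℝ≥0 be strictly increasing, and let x_s ∈ ℝ≥0. Then every point x' in the interval [min{x_s, x⋆}, max{x_s, x⋆}] is maximal with respect to the one-many ordering: there is no x'' ∈ ℝ≥0 with x'' ≻ x'. -/
/-!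
Strict quasiconcavity together with a global maximum at `x⋆` makes `u` strictly increasing on
`[0, x⋆]` and strictly decreasing on `[x⋆, ∞)`. If `x''` is at least as good as a point `x'`
lying between `x_s` and `x⋆`, then `x''` is no farther from `x_s` than `x'`, so it lies on the
`x_s` side of `x'`; unless `x'' = x'`, monotonicity then gives `u x'' < u x'`.
-/

open NNReal Set

lemma NNReal.exists_combo_eq_of_lt_of_lt {a b c : ℝ≥0} (hab : a < b) (hbc : b < c) :
    ∃ l : ℝ≥0, 0 < l ∧ l < 1 ∧ l * a + (1 - l) * c = b := by
  have hac : a < c := hab.trans hbc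
  have hl1 : (c - b) / (c - a) < 1 := by
    rw [div_lt_one (tsub_pos_of_lt hac)]
    exact (tsub_lt_tsub_iff_left_of_le hbc.le).mpr hab
  refine ⟨(c - b) / (c - a), div_pos (tsub_pos_of_lt hbc) (tsub_pos_of_lt hac), hl1, ?_⟩
  apply NNReal.coe_injective
  have hca : (c : ℝ) - a ≠ 0 := sub_ne_zero.mpr (NNReal.coe_lt_coe.mpr hac).ne'
  push_cast [NNReal.coe_sub hbc.le, NNReal.coe_sub hac.le, NNReal.coe_sub hl1.le]
  field_simp
  ring

lemma NNReal.le_of_nndist_le_of_le {x y z : ℝ≥0} (hzx : z ≤ x) (h : nndist y z ≤ nndist x z) :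
    y ≤ x := by
  rw [← NNReal.coe_le_coe, coe_nndist, coe_nndist, NNReal.dist_eq, NNReal.dist_eq,
    abs_of_nonneg (sub_nonneg.mpr (NNReal.coe_le_coe.mpr hzx))] at h
  exact NNReal.coe_le_coe.mp (by linarith [le_abs_self ((y : ℝ) - z)])

lemma NNReal.le_of_nndist_le_of_ge {x y z : ℝ≥0} (hxz : x ≤ z) (h : nndist y z ≤ nndist x z) :
    x ≤ y := by
  rw [← NNReal.coe_le_coe, coe_nndist, coe_nndist, NNReal.dist_eq, NNReal.dist_eq,
    abs_of_nonpos (sub_nonpos.mpr (NNReal.coe_le_coe.mpr hxz))] at h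
  exact NNReal.coe_le_coe.mp (by linarith [neg_abs_le ((y : ℝ) - z)])

namespace StrictQuasiconcave

variable {u : ℝ≥0 → ℝ} {xstar : ℝ≥0}

lemma min_lt_of_lt_of_lt (hu : StrictQuasiconcave u) {a b c : ℝ≥0} (hab : a < b) (hbc : b < c) :
    min (u a) (u c) < u b := by
  obtain ⟨l, hl0, hl1, rfl⟩ := NNReal.exists_combo_eq_of_lt_of_lt hab hbc
  exact hu a c (hab.trans hbc).ne l hl0 hl1

lemma strictMonoOn_Iic (hu : StrictQuasiconcave u) (hmax : ∀ y, u y ≤ u xstar) :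
    StrictMonoOn u (Iic xstar) := by
  intro a _ b hb hab
  rcases (mem_Iic.mp hb).lt_or_eq with hb | rfl
  · simpa only [min_eq_left (hmax a)] using hu.min_lt_of_lt_of_lt hab hb
  · obtain ⟨m, ham, hmb⟩ := exists_between hab
    calc u a = min (u a) (u b) := (min_eq_left (hmax a)).symm
      _ < u m := hu.min_lt_of_lt_of_lt ham hmb
      _ ≤ u b := hmax m

lemma strictAntiOn_Ici (hu : StrictQuasiconcave u) (hmax : ∀ y, u y ≤ u xstar) :
    StrictAntiOn u (Ici xstar) := by
  intro a ha b _ hab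
  rcases (mem_Ici.mp ha).lt_or_eq with ha | rfl
  · simpa only [min_eq_right (hmax b)] using hu.min_lt_of_lt_of_lt ha hab
  · obtain ⟨m, ham, hmb⟩ := exists_between hab
    calc u b = min (u xstar) (u b) := (min_eq_right (hmax b)).symm
      _ < u m := hu.min_lt_of_lt_of_lt ham hmb
      _ ≤ u xstar := hmax m

end StrictQuasiconcave

theorem maximal_inside_interval_general
    (u : ℝ≥0 → ℝ) (c₁ : ℝ≥0 → ℝ≥0) (xstar xs : ℝ≥0)
    (hu : StrictQuasiconcave u)
    (hmax : ∀ y : ℝ≥0, u y ≤ u xstar)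
    (hc : StrictMono c₁) :
    ∀ x' ∈ Icc (min xs xstar) (max xs xstar),
      ¬ ∃ x'' : ℝ≥0, OneManyStrict u c₁ xs x'' x' := by
  rintro x' ⟨hx'_ge, hx'_le⟩ ⟨x'', ⟨hu'', hc''⟩, hnot⟩
  have hd : nndist x'' xs ≤ nndist x' xs := hc.le_iff_le.mp hc''
  have hne : x'' ≠ x' := by
    rintro rfl
    exact hnot ⟨le_rfl, le_rfl⟩
  refine hu''.not_gt ?_
  rcases le_total xs xstar with h | h
  · rw [min_eq_left h] at hx'_ge
    rw [max_eq_right h] at hx'_le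
    have hlt : x'' < x' := (NNReal.le_of_nndist_le_of_le hx'_ge hd).lt_of_ne hne
    exact hu.strictMonoOn_Iic hmax (hlt.le.trans hx'_le) hx'_le hlt
  · rw [min_eq_right h] at hx'_ge
    rw [max_eq_left h] at hx'_le
    have hlt : x' < x'' := (NNReal.le_of_nndist_le_of_ge hx'_le hd).lt_of_ne hne.symm
    exact hu.strictAntiOn_Ici hmax hx'_ge (hx'_ge.trans hlt.le) hlt

theorem maximal_inside_interval
    (u : ℝ≥0 → ℝ) (c₁ : ℝ≥0 → ℝ≥0) (xstar xs : ℝ≥0)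
    (hu : StrictQuasiconcave u)
    (hmax : ∀ y : ℝ≥0, u y ≤ u xstar)
    (huniq : ∀ y : ℝ≥0, (∀ z : ℝ≥0, u z ≤ u y) → y = xstar)
    (hc : StrictMono c₁) :
    ∀ x' ∈ Icc (min xs xstar) (max xs xstar),
      ¬ ∃ x'' : ℝ≥0, OneManyStrict u c₁ xs x'' x' :=
  maximal_inside_interval_general u c₁ xstar xs hu hmax hc
end

section
/- Let there be two agents with strategy spaces ℝ≥0. Let u : ℝ≥0 → ℝ be strictly quasiconcave with unique maximizer x⋆ ∈ ℝ≥0 (so u₁ = u₂ = u), and for i ∈ {1,2} let c₁^i : ℝ≥0 → ℝ≥0 be strictly increasing and let U_i : ℝ≥0 × ℝ≥0 → ℝ be agent i's payoff (first argument is own choice), upper semicontinuous in its first argument. If the pair (x°₁, x°₂) is an equilibrium after deferral — i.e., for each i, x°_i belongs to max(ℝ≥0, ≽_{i,x°_{-i}}) and U_i(x°_i, x°_{-i}) ≥ U_i(y, x°_{-i}) for every y ∈ max(ℝ≥0, ≽_{i,x°_{-i}}) — then x°₁ = x°₂. -/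
open NNReal Set

lemma midpoint_nndist_lt (a b : ℝ≥0) (h : a ≠ b) :
    nndist ((1/2 : ℝ≥0) * a + (1 - (1/2 : ℝ≥0)) * b) b < nndist a b := by
  have h2 : (1 - (1/2 : ℝ≥0)) = 1/2 := by
    rw [← NNReal.coe_inj]; push_cast; norm_num
  rw [h2, ← coe_lt_coe, coe_nndist, coe_nndist, NNReal.dist_eq, NNReal.dist_eq]
  push_cast
  have hab : (a : ℝ) ≠ (b : ℝ) := by exact_mod_cast h
  rcases lt_or_gt_of_ne hab with hlt | hlt
  · rw [abs_of_neg (by linarith : (a:ℝ) - b < 0), abs_sub_lt_iff]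
    constructor <;> linarith
  · rw [abs_of_pos (by linarith : (0:ℝ) < a - b), abs_sub_lt_iff]
    constructor <;> linarith

theorem equilibrium_after_deferral_symmetric
    (u : ℝ≥0 → ℝ) (xstar : ℝ≥0)
    (hu : StrictQuasiconcave u)
    (hmax : ∀ y : ℝ≥0, u y ≤ u xstar)
    (huniq : ∀ y : ℝ≥0, (∀ z : ℝ≥0, u z ≤ u y) → y = xstar)
    (c₁ c₂ : ℝ≥0 → ℝ≥0) (hc₁ : StrictMono c₁) (hc₂ : StrictMono c₂)
    (U₁ U₂ : ℝ≥0 → ℝ≥0 → ℝ)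
    (hU₁ : ∀ r : ℝ≥0, UpperSemicontinuous fun x => U₁ x r)
    (hU₂ : ∀ r : ℝ≥0, UpperSemicontinuous fun x => U₂ x r)
    (x₁ x₂ : ℝ≥0)
    (h₁ : x₁ ∈ maxSet u c₁ x₂ ∧ ∀ y ∈ maxSet u c₁ x₂, U₁ y x₂ ≤ U₁ x₁ x₂)
    (h₂ : x₂ ∈ maxSet u c₂ x₁ ∧ ∀ y ∈ maxSet u c₂ x₁, U₂ y x₁ ≤ U₂ x₂ x₁) :
    x₁ = x₂ := by
  by_contra hne
  have hl0 : (0:ℝ≥0) < 1/2 := by norm_num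
  have hl1 : (1/2:ℝ≥0) < 1 := by
    rw [← NNReal.coe_lt_coe]; norm_num
  rcases le_or_gt (u x₁) (u x₂) with hle | hlt
  · set y := (1/2 : ℝ≥0) * x₁ + (1 - (1/2 : ℝ≥0)) * x₂ with hy
    have hq := hu x₁ x₂ hne (1/2) hl0 hl1
    have huy : u x₁ < u y := lt_of_le_of_lt (le_min le_rfl hle) hq
    have hd : c₁ (nndist y x₂) < c₁ (nndist x₁ x₂) :=
      hc₁ (midpoint_nndist_lt x₁ x₂ hne)
    exact h₁.1 ⟨y, ⟨huy.le, hd.le⟩, fun hrev => absurd hrev.1 (not_le.mpr huy)⟩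
  · set y := (1/2 : ℝ≥0) * x₂ + (1 - (1/2 : ℝ≥0)) * x₁ with hy
    have hq := hu x₂ x₁ (Ne.symm hne) (1/2) hl0 hl1
    have huy : u x₂ < u y := lt_of_le_of_lt (le_min le_rfl hlt.le) hq
    have hd : c₂ (nndist y x₁) < c₂ (nndist x₂ x₁) :=
      hc₂ (midpoint_nndist_lt x₂ x₁ (Ne.symm hne))
    exact h₂.1 ⟨y, ⟨huy.le, hd.le⟩, fun hrev => absurd hrev.1 (not_le.mpr huy)⟩
end

section
/- Let there be two agents with strategy spaces ℝ≥0. Let u : ℝ≥0 → ℝ be strictly quasiconcave with unique maximizer x⋆ ∈ ℝ≥0 (so u₁ = u₂ = u), and for i ∈ {1,2} let c₁^i : ℝ≥0 → ℝ≥0 be strictly increasing and let U_i : ℝ≥0 × ℝ≥0 → ℝ be agent i's payoff (first argument is own choice). If the pair (x°₁, x°₂) is an equilibrium — i.e., for each i, U_i(x°_i, x°_{-i}) ≥ U_i(y, x°_{-i}) for all y ∈ ℝ≥0 — and x°₁ = x°₂, then (x°₁, x°₂) is an equilibrium after deferral: for each i, x°_i belongs to max(ℝ≥0, ≽_{i,x°_{-i}})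 and maximizes U_i(·, x°_{-i}) over max(ℝ≥0, ≽_{i,x°_{-i}}). -/
open NNReal Set

lemma self_mem_maxSet (u : ℝ≥0 → ℝ) {c : ℝ≥0 → ℝ≥0} (hc : StrictMono c) (x : ℝ≥0) :
    x ∈ maxSet u c x := by
  rintro ⟨y, hyx, hxy⟩
  obtain rfl : y = x := by
    have h := hc.le_iff_le.mp hyx.2
    rwa [nndist_self, nonpos_iff_eq_zero, nndist_eq_zero] at h
  exact hxy hyx

theorem symmetric_equilibrium_is_equilibrium_after_deferral_general
    (u : ℝ≥0 → ℝ)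
    (c₁ c₂ : ℝ≥0 → ℝ≥0) (hc₁ : StrictMono c₁) (hc₂ : StrictMono c₂)
    (U₁ U₂ : ℝ≥0 → ℝ≥0 → ℝ)
    (x₁ x₂ : ℝ≥0)
    (heq₁ : ∀ y : ℝ≥0, U₁ y x₂ ≤ U₁ x₁ x₂)
    (heq₂ : ∀ y : ℝ≥0, U₂ y x₁ ≤ U₂ x₂ x₁)
    (hsym : x₁ = x₂) :
    (x₁ ∈ maxSet u c₁ x₂ ∧ ∀ y ∈ maxSet u c₁ x₂, U₁ y x₂ ≤ U₁ x₁ x₂) ∧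
    (x₂ ∈ maxSet u c₂ x₁ ∧ ∀ y ∈ maxSet u c₂ x₁, U₂ y x₁ ≤ U₂ x₂ x₁) := by
  subst hsym
  exact ⟨⟨self_mem_maxSet u hc₁ x₁, fun y _ => heq₁ y⟩,
    ⟨self_mem_maxSet u hc₂ x₁, fun y _ => heq₂ y⟩⟩

theorem symmetric_equilibrium_is_equilibrium_after_deferral
    (u : ℝ≥0 → ℝ) (xstar : ℝ≥0)
    (hu : StrictQuasiconcave u)
    (hmax : ∀ y : ℝ≥0, u y ≤ u xstar)
    (huniq : ∀ y : ℝ≥0, (∀ z : ℝ≥0, u z ≤ u y) → y = xstar)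
    (c₁ c₂ : ℝ≥0 → ℝ≥0) (hc₁ : StrictMono c₁) (hc₂ : StrictMono c₂)
    (U₁ U₂ : ℝ≥0 → ℝ≥0 → ℝ)
    (x₁ x₂ : ℝ≥0)
    (heq₁ : ∀ y : ℝ≥0, U₁ y x₂ ≤ U₁ x₁ x₂)
    (heq₂ : ∀ y : ℝ≥0, U₂ y x₁ ≤ U₂ x₂ x₁)
    (hsym : x₁ = x₂) :
    (x₁ ∈ maxSet u c₁ x₂ ∧ ∀ y ∈ maxSet u c₁ x₂, U₁ y x₂ ≤ U₁ x₁ x₂) ∧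
    (x₂ ∈ maxSet u c₂ x₁ ∧ ∀ y ∈ maxSet u c₂ x₁, U₂ y x₁ ≤ U₂ x₂ x₁) :=
  symmetric_equilibrium_is_equilibrium_after_deferral_general u c₁ c₂ hc₁ hc₂ U₁ U₂ x₁ x₂ heq₁ heq₂
    hsym
end

section
/- Consider Akerlof's conformist model with two agents: fix real constants a > 0, 0 ≤ d ≤ b, and k, and for i ∈ {1,2} let agent i's payoff on ℝ≥0 × ℝ≥0 be U_i(x_i, x_{-i}) = −d·|x_{-i} − x_i| − a·x_i² + b·x_i + k. Then a pair (x₁, x₂) ∈ ℝ≥0 × ℝ≥0 is an equilibrium (each x_i maximizes U_i(·, x_{-i}) over ℝ≥0) if and only if x₁ = x₂ and x₁ ∈ [(b−d)/(2a), (b+d)/(2a)]. -/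
/-!
A best response `x` to `z` is also a best response to itself, since by the triangle inequality
moving the reference point from `z` to `x` lowers every competitor's payoff by at most
`d * |z - x|`, which is exactly what `x` itself gains. Against itself, `x` loses
`d * |x - y| + (x - y) * (b - 2 * a * x) + a * (x - y) ^ 2` by deviating to `y`, which is
nonnegative for all `y` exactly when `|2 * a * x - b| ≤ d`. Finally, playing each other's choice
shows that two mutual best responses satisfy `d * |x₁ - x₂| ≤ 0`.
-/

open Set

namespace Conformist

variable {a b d k : ℝ}

def payoff (a b d k z y : ℝ) : ℝ := -d * |z - y| - a * y ^ 2 + b * y + k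

/-- `x` maximizes `payoff a b d k z` over `ℝ≥0`, where `z` is the other agent's choice. -/
def IsBestResponse (a b d k z x : ℝ) : Prop :=
  ∀ y : ℝ, 0 ≤ y → payoff a b d k z y ≤ payoff a b d k z x

lemma payoff_self_sub_payoff (a b d k x y : ℝ) :
    payoff a b d k x x - payoff a b d k x y =
      d * |x - y| + (x - y) * (b - 2 * a * x) + a * (x - y) ^ 2 := by
  simp only [payoff, sub_self, abs_zero]
  ring

lemma IsBestResponse.self (hd : 0 ≤ d) {z x : ℝ} (h : IsBestResponse a b d k z x) :
    IsBestResponse a b d k x x := by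
  intro y hy
  have htri : d * |z - y| ≤ d * |z - x| + d * |x - y| := by
    rw [← mul_add]
    exact mul_le_mul_of_nonneg_left (abs_sub_le z x y) hd
  have := h y hy
  simp only [payoff, sub_self, abs_zero] at this ⊢
  linarith

lemma mem_Icc_iff_abs_le (ha : 0 < a) (x : ℝ) :
    x ∈ Icc ((b - d) / (2 * a)) ((b + d) / (2 * a)) ↔ |2 * a * x - b| ≤ d := by
  have h2a : 0 < 2 * a := by positivity
  rw [mem_Icc, div_le_iff₀ h2a, le_div_iff₀ h2a, abs_le]
  constructor <;> rintro ⟨_, _⟩ <;> constructor <;> linarith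

lemma isBestResponse_self_of_abs_le (ha : 0 ≤ a) {x : ℝ} (hx : |2 * a * x - b| ≤ d) :
    IsBestResponse a b d k x x := by
  intro y _
  have hlin : -(d * |x - y|) ≤ (x - y) * (b - 2 * a * x) := by
    have hbx : |b - 2 * a * x| ≤ d := abs_sub_comm b _ ▸ hx
    calc -(d * |x - y|) ≤ -|(x - y) * (b - 2 * a * x)| := by
          rw [abs_mul, mul_comm d]; gcongr
      _ ≤ (x - y) * (b - 2 * a * x) := neg_abs_le _
  have := payoff_self_sub_payoff a b d k x y
  nlinarith [sq_nonneg (x - y)]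

/-- Deviating from `x` to the nearer endpoint `y` of the interval of `mem_Icc_iff_abs_le` gains
`a * (x - y) ^ 2`. -/
lemma abs_le_of_isBestResponse_self (ha : 0 < a) (hbd : 0 ≤ b + d) {x : ℝ} (hx : 0 ≤ x)
    (h : IsBestResponse a b d k x x) : |2 * a * x - b| ≤ d := by
  have h2a : 0 < 2 * a := by positivity
  rw [abs_le]
  constructor
  · by_contra! hlt
    set y := (b - d) / (2 * a) with hy
    have hay : 2 * a * y = b - d := by rw [hy]; field_simp
    have hxy : x < y := by nlinarith
    have hdev := payoff_self_sub_payoff a b d k x y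
    rw [abs_of_neg (by linarith)] at hdev
    nlinarith [h y (by linarith)]
  · by_contra! hlt
    set y := (b + d) / (2 * a) with hy
    have hay : 2 * a * y = b + d := by rw [hy]; field_simp
    have hyx : y < x := by nlinarith
    have hdev := payoff_self_sub_payoff a b d k x y
    rw [abs_of_pos (by linarith)] at hdev
    nlinarith [h y (div_nonneg hbd h2a.le)]

lemma eq_of_isBestResponse_of_isBestResponse (hd : 0 < d) {x z : ℝ} (hx : 0 ≤ x) (hz : 0 ≤ z)
    (hxz : IsBestResponse a b d k z x) (hzx : IsBestResponse a b d k x z) : x = z := by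
  have h₁ := hxz z hz
  have h₂ := hzx x hx
  simp only [payoff, sub_self, abs_zero, abs_sub_comm x z] at h₁ h₂
  have : |z - x| ≤ 0 := by nlinarith
  linarith [abs_nonpos_iff.mp this]

end Conformist

open Conformist in
theorem conformist_equilibrium_characterization
    (a b d k : ℝ) (ha : 0 < a) (hd0 : 0 ≤ d) (hdb : d ≤ b)
    (x₁ x₂ : ℝ) (h₁ : 0 ≤ x₁) (h₂ : 0 ≤ x₂) :
    ((∀ y : ℝ, 0 ≤ y →
        -d * |x₂ - y| - a * y ^ 2 + b * y + k ≤
          -d * |x₂ - x₁| - a * x₁ ^ 2 + b * x₁ + k) ∧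
     (∀ y : ℝ, 0 ≤ y →
        -d * |x₁ - y| - a * y ^ 2 + b * y + k ≤
          -d * |x₁ - x₂| - a * x₂ ^ 2 + b * x₂ + k))
    ↔ (x₁ = x₂ ∧ x₁ ∈ Icc ((b - d) / (2 * a)) ((b + d) / (2 * a))) := by
  change IsBestResponse a b d k x₂ x₁ ∧ IsBestResponse a b d k x₁ x₂ ↔ _
  have hbd : 0 ≤ b + d := by linarith
  simp only [mem_Icc_iff_abs_le ha]
  constructor
  · rintro ⟨h₁₂, h₂₁⟩
    have hx₁ := abs_le_of_isBestResponse_self ha hbd h₁ (h₁₂.self hd0)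
    have hx₂ := abs_le_of_isBestResponse_self ha hbd h₂ (h₂₁.self hd0)
    refine ⟨?_, hx₁⟩
    rcases hd0.eq_or_lt with rfl | hd
    · -- without conformity both agents play the unique maximizer `b / (2 * a)` of `u`
      have e₁ := abs_nonpos_iff.mp hx₁
      have e₂ := abs_nonpos_iff.mp hx₂
      exact mul_left_cancel₀ (by positivity : 2 * a ≠ 0) (by linarith)
    · exact eq_of_isBestResponse_of_isBestResponse hd h₁ h₂ h₁₂ h₂₁
  · rintro ⟨rfl, hx⟩
    exact ⟨isBestResponse_self_of_abs_le ha.le hx, isBestResponse_self_of_abs_le ha.le hx⟩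
end

section
/- Consider Akerlof's conformist model with two agents: fix real constants a > 0, 0 < d ≤ b, and k, and for i ∈ {1,2} let agent i's personal utility be u(x) = −a·x² + b·x + k (maximized at x⋆ = b/(2a)), let the cost of current social distance be c₁(t) = d·t, and let agent i's payoff be U_i(x_i, x_{-i}) = −d·|x_{-i} − x_i| − a·x_i² + b·x_i + k on ℝ≥0 × ℝ≥0 (no future social-distance term, c₂ = 0). Then a pair (x₁, x₂) ∈ ℝ≥0 × ℝ≥0 is an equilibrium after deferral — i.e., for each i, x_i belongs to max(ℝ≥0, ≽_{i,x_{-i}}) and U_i(x_i, x_{-i}) ≥ U_i(y, x_{-i}) for all y ∈ max(ℝ≥0, ≽_{i,x_{-i}}) — if and only if x₁ = x₂ and x₁ ∈ [(b−d)/(2a), (b+d)/(2a)]. In particular, the set of equilibria after deferral coincides with the set of standard equilibria, so no deferral loss arises. -/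
/-!
The consideration set at reference point `r` is the segment between `r` and the bliss point
`s = b / (2a)`: a choice beyond the segment is dominated by its nearer endpoint, which is both
more useful and closer to `r`, while inside the segment every move that does not increase the
distance to `r` goes away from `s`. This segment contains the agent's own reference point and the
profitable deviation towards `(b ∓ d) / (2a)` whenever `r` lies outside
`[(b - d) / (2a), (b + d) / (2a)]`. Hence equilibria after deferral and standard equilibria are
characterised alike: comparing each agent's choice with copying the other shows that any gap costs
both agents, so `x₁ = x₂`, and copying is a best response exactly when `|b - 2ar| ≤ d`.
-/

open Set

/-- The strict part `x ≻ y` of the one-many ordering on the reals, given personal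
utility `u`, cost `c` of current social distance, and reference point `r`. -/
def SPrefR (u c : ℝ → ℝ) (r x y : ℝ) : Prop :=
  (u y ≤ u x ∧ c |x - r| ≤ c |y - r|) ∧ ¬ (u x ≤ u y ∧ c |y - r| ≤ c |x - r|)

/-- The consideration set: maximal elements of `ℝ≥0 = [0,∞)` under the one-many
ordering with utility `u`, cost `c` and reference point `r`. -/
def maxSetR (u c : ℝ → ℝ) (r : ℝ) : Set ℝ :=
  {x : ℝ | 0 ≤ x ∧ ¬ ∃ y : ℝ, 0 ≤ y ∧ SPrefR u c r y x}

section ConsiderationSet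

variable {u c : ℝ → ℝ} {r s y z : ℝ}

lemma sPrefR_of_le_of_abs_sub_lt (hc : StrictMono c) (hu : u z ≤ u y) (hyz : |y - r| < |z - r|) :
    SPrefR u c r y z :=
  ⟨⟨hu, (hc hyz).le⟩, fun h => (hc hyz).not_ge h.2⟩

lemma apply_lt_of_mem_uIcc_of_abs_sub_le (hinc : StrictMonoOn u (Iic s))
    (hdec : StrictAntiOn u (Ici s)) (hz : z ∈ uIcc r s) (hyz : |y - r| ≤ |z - r|) (hne : y ≠ z) :
    u y < u z := by
  rcases mem_uIcc.1 hz with ⟨hrz, hzs⟩ | ⟨hsz, hzr⟩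
  · rw [abs_of_nonneg (sub_nonneg.2 hrz)] at hyz
    have hlt : y < z := lt_of_le_of_ne (by linarith [le_abs_self (y - r)]) hne
    exact hinc (mem_Iic.2 (hlt.le.trans hzs)) (mem_Iic.2 hzs) hlt
  · rw [abs_of_nonpos (sub_nonpos.2 hzr)] at hyz
    have hlt : z < y := lt_of_le_of_ne (by linarith [neg_abs_le (y - r)]) hne.symm
    exact hdec (mem_Ici.2 hsz) (mem_Ici.2 (hsz.trans hlt.le)) hlt

lemma not_sPrefR_of_mem_uIcc (hinc : StrictMonoOn u (Iic s)) (hdec : StrictAntiOn u (Ici s))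
    (hc : StrictMono c) (hz : z ∈ uIcc r s) : ¬ SPrefR u c r y z := by
  rintro ⟨⟨hu, hcyz⟩, hstrict⟩
  rcases eq_or_ne y z with rfl | hne
  · exact hstrict ⟨le_rfl, le_rfl⟩
  · exact (apply_lt_of_mem_uIcc_of_abs_sub_le hinc hdec hz (hc.le_iff_le.1 hcyz) hne).not_ge hu

lemma exists_sPrefR_of_notMem_uIcc (hinc : StrictMonoOn u (Iic s))
    (hdec : StrictAntiOn u (Ici s)) (hc : StrictMono c) (hr : 0 ≤ r) (hs : 0 ≤ s)
    (hz : z ∉ uIcc r s) : ∃ y, 0 ≤ y ∧ SPrefR u c r y z := by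
  rcases lt_or_ge z (min r s) with hlt | hge
  · refine ⟨min r s, le_min hr hs, sPrefR_of_le_of_abs_sub_lt hc ?_ ?_⟩
    · exact hinc.monotoneOn (mem_Iic.2 (hlt.le.trans (min_le_right r s)))
        (mem_Iic.2 (min_le_right r s)) hlt.le
    · rw [abs_of_nonpos (by linarith [min_le_left r s]), abs_of_neg (by linarith [min_le_left r s])]
      linarith
  · have hgt : max r s < z := lt_of_not_ge fun hle => hz ⟨hge, hle⟩
    refine ⟨max r s, hr.trans (le_max_left r s), sPrefR_of_le_of_abs_sub_lt hc ?_ ?_⟩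
    · exact hdec.antitoneOn (mem_Ici.2 (le_max_right r s))
        (mem_Ici.2 ((le_max_right r s).trans hgt.le)) hgt.le
    · rw [abs_of_nonneg (by linarith [le_max_left r s]), abs_of_pos (by linarith [le_max_left r s])]
      linarith

theorem maxSetR_eq_uIcc (hinc : StrictMonoOn u (Iic s)) (hdec : StrictAntiOn u (Ici s))
    (hc : StrictMono c) (hr : 0 ≤ r) (hs : 0 ≤ s) : maxSetR u c r = uIcc r s := by
  ext z
  refine ⟨fun ⟨_, hundominated⟩ => ?_, fun hz => ⟨(le_min hr hs).trans hz.1, ?_⟩⟩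
  · by_contra hz
    exact hundominated (exists_sPrefR_of_notMem_uIcc hinc hdec hc hr hs hz)
  · rintro ⟨y, -, hy⟩
    exact not_sPrefR_of_mem_uIcc hinc hdec hc hz hy

end ConsiderationSet

section Quadratic

variable {a b k : ℝ}

lemma quadratic_strictMonoOn_Iic (ha : 0 < a) :
    StrictMonoOn (fun x => -a * x ^ 2 + b * x + k) (Iic (b / (2 * a))) := by
  intro x hx y hy hxy
  have hsum : a * (x + y) < b := by
    have hpeak : a * (2 * (b / (2 * a))) = b := by field_simp
    nlinarith [mem_Iic.1 hx, mem_Iic.1 hy]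
  nlinarith [mul_pos (sub_pos.2 hxy) (sub_pos.2 hsum)]

lemma quadratic_strictAntiOn_Ici (ha : 0 < a) :
    StrictAntiOn (fun x => -a * x ^ 2 + b * x + k) (Ici (b / (2 * a))) := by
  intro x hx y hy hxy
  have hsum : b < a * (x + y) := by
    have hpeak : a * (2 * (b / (2 * a))) = b := by field_simp
    nlinarith [mem_Ici.1 hx, mem_Ici.1 hy]
  nlinarith [mul_pos (sub_pos.2 hxy) (sub_pos.2 hsum)]

end Quadratic

/-- The paper's `U_i(y, r)`: agent `i` chooses `y`, the other agent chooses `r`. -/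
def conformistPayoff (a b d k r y : ℝ) : ℝ :=
  -d * |r - y| - a * y ^ 2 + b * y + k

/-- `S r` is the set an agent chooses from when the other chooses `r`: the consideration set for
equilibria after deferral, `ℝ≥0` for standard equilibria. -/
def IsEquilibriumOn (a b d k : ℝ) (S : ℝ → Set ℝ) (x₁ x₂ : ℝ) : Prop :=
  (x₁ ∈ S x₂ ∧ ∀ y ∈ S x₂, conformistPayoff a b d k x₂ y ≤ conformistPayoff a b d k x₂ x₁) ∧
    (x₂ ∈ S x₁ ∧ ∀ y ∈ S x₁, conformistPayoff a b d k x₁ y ≤ conformistPayoff a b d k x₁ x₂)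

section Payoff

variable {a b d k r : ℝ}

lemma conformistPayoff_le_self_of_mem_Icc (ha : 0 < a)
    (hr : r ∈ Icc ((b - d) / (2 * a)) ((b + d) / (2 * a))) (y : ℝ) :
    conformistPayoff a b d k r y ≤ conformistPayoff a b d k r r := by
  obtain ⟨hlo, hhi⟩ := hr
  rw [div_le_iff₀ (by positivity)] at hlo
  rw [le_div_iff₀ (by positivity)] at hhi
  unfold conformistPayoff
  rw [sub_self, abs_zero]
  rcases le_total y r with hyr | hry
  · rw [abs_of_nonneg (sub_nonneg.2 hyr)]
    nlinarith [mul_nonneg (sub_nonneg.2 hyr) (by linarith : (0 : ℝ) ≤ b + d - 2 * a * r),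
      mul_nonneg ha.le (sq_nonneg (r - y))]
  · rw [abs_of_nonpos (sub_nonpos.2 hry)]
    nlinarith [mul_nonneg (sub_nonneg.2 hry) (by linarith : (0 : ℝ) ≤ 2 * a * r - (b - d)),
      mul_nonneg ha.le (sq_nonneg (r - y))]

-- The gain from deviating to `p = (b - d) / (2a)` is exactly `a (p - r)²`.
lemma conformistPayoff_self_lt_of_lt (ha : 0 < a) (hr : r < (b - d) / (2 * a)) :
    conformistPayoff a b d k r r < conformistPayoff a b d k r ((b - d) / (2 * a)) := by
  have hp : 2 * a * ((b - d) / (2 * a)) = b - d := by field_simp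
  unfold conformistPayoff
  rw [sub_self, abs_zero, abs_of_neg (sub_neg.2 hr)]
  nlinarith [mul_pos ha (mul_pos (sub_pos.2 hr) (sub_pos.2 hr))]

lemma conformistPayoff_self_lt_of_gt (ha : 0 < a) (hr : (b + d) / (2 * a) < r) :
    conformistPayoff a b d k r r < conformistPayoff a b d k r ((b + d) / (2 * a)) := by
  have hq : 2 * a * ((b + d) / (2 * a)) = b + d := by field_simp
  unfold conformistPayoff
  rw [sub_self, abs_zero, abs_of_pos (sub_pos.2 hr)]
  nlinarith [mul_pos ha (mul_pos (sub_pos.2 hr) (sub_pos.2 hr))]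

lemma mem_Icc_of_forall_conformistPayoff_le (ha : 0 < a) (hd : 0 ≤ d)
    (h : ∀ y ∈ uIcc r (b / (2 * a)), conformistPayoff a b d k r y ≤ conformistPayoff a b d k r r) :
    r ∈ Icc ((b - d) / (2 * a)) ((b + d) / (2 * a)) := by
  have hps : (b - d) / (2 * a) ≤ b / (2 * a) := by gcongr; linarith
  have hsq : b / (2 * a) ≤ (b + d) / (2 * a) := by gcongr; linarith
  constructor
  · by_contra! hr
    exact (h _ (mem_uIcc.2 (Or.inl ⟨hr.le, hps⟩))).not_gt (conformistPayoff_self_lt_of_lt ha hr)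
  · by_contra! hr
    exact (h _ (mem_uIcc.2 (Or.inr ⟨hsq, hr.le⟩))).not_gt (conformistPayoff_self_lt_of_gt ha hr)

lemma eq_of_conformistPayoff_self_le (hd : 0 < d) {x₁ x₂ : ℝ}
    (h₁ : conformistPayoff a b d k x₂ x₂ ≤ conformistPayoff a b d k x₂ x₁)
    (h₂ : conformistPayoff a b d k x₁ x₁ ≤ conformistPayoff a b d k x₁ x₂) : x₁ = x₂ := by
  unfold conformistPayoff at h₁ h₂
  rw [sub_self, abs_zero, abs_sub_comm] at h₁
  rw [sub_self, abs_zero] at h₂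
  have hgap : |x₁ - x₂| ≤ 0 := by nlinarith
  exact sub_eq_zero.1 (abs_nonpos_iff.1 hgap)

theorem isEquilibriumOn_iff (ha : 0 < a) (hd : 0 < d) {S : ℝ → Set ℝ}
    (hS : ∀ r, 0 ≤ r → r ∈ S r ∧ uIcc r (b / (2 * a)) ⊆ S r) {x₁ x₂ : ℝ} (h₁ : 0 ≤ x₁)
    (h₂ : 0 ≤ x₂) :
    IsEquilibriumOn a b d k S x₁ x₂ ↔
      x₁ = x₂ ∧ x₁ ∈ Icc ((b - d) / (2 * a)) ((b + d) / (2 * a)) := by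
  constructor
  · rintro ⟨⟨-, hbest₁⟩, ⟨-, hbest₂⟩⟩
    obtain rfl : x₁ = x₂ :=
      eq_of_conformistPayoff_self_le hd (hbest₁ x₂ (hS x₂ h₂).1) (hbest₂ x₁ (hS x₁ h₁).1)
    exact ⟨rfl, mem_Icc_of_forall_conformistPayoff_le ha hd.le
      fun y hy => hbest₁ y ((hS x₁ h₁).2 hy)⟩
  · rintro ⟨rfl, hr⟩
    have hbest := conformistPayoff_le_self_of_mem_Icc (k := k) ha hr
    exact ⟨⟨(hS x₁ h₁).1, fun y _ => hbest y⟩, ⟨(hS x₁ h₁).1, fun y _ => hbest y⟩⟩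

end Payoff

theorem conformist_equilibrium_after_deferral_characterization
    (a b d k : ℝ) (ha : 0 < a) (hd0 : 0 < d) (hdb : d ≤ b)
    (x₁ x₂ : ℝ) (h₁ : 0 ≤ x₁) (h₂ : 0 ≤ x₂) :
    (((x₁ ∈ maxSetR (fun x => -a * x ^ 2 + b * x + k) (fun t => d * t) x₂ ∧
        ∀ y ∈ maxSetR (fun x => -a * x ^ 2 + b * x + k) (fun t => d * t) x₂,
          -d * |x₂ - y| - a * y ^ 2 + b * y + k ≤
            -d * |x₂ - x₁| - a * x₁ ^ 2 + b * x₁ + k) ∧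
     (x₂ ∈ maxSetR (fun x => -a * x ^ 2 + b * x + k) (fun t => d * t) x₁ ∧
        ∀ y ∈ maxSetR (fun x => -a * x ^ 2 + b * x + k) (fun t => d * t) x₁,
          -d * |x₁ - y| - a * y ^ 2 + b * y + k ≤
            -d * |x₁ - x₂| - a * x₂ ^ 2 + b * x₂ + k))
    ↔ (x₁ = x₂ ∧ x₁ ∈ Icc ((b - d) / (2 * a)) ((b + d) / (2 * a))))
    ∧
    -- In particular, the equilibria after deferral coincide with the standard equilibria.
    (((x₁ ∈ maxSetR (fun x => -a * x ^ 2 + b * x + k) (fun t => d * t) x₂ ∧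
        ∀ y ∈ maxSetR (fun x => -a * x ^ 2 + b * x + k) (fun t => d * t) x₂,
          -d * |x₂ - y| - a * y ^ 2 + b * y + k ≤
            -d * |x₂ - x₁| - a * x₁ ^ 2 + b * x₁ + k) ∧
     (x₂ ∈ maxSetR (fun x => -a * x ^ 2 + b * x + k) (fun t => d * t) x₁ ∧
        ∀ y ∈ maxSetR (fun x => -a * x ^ 2 + b * x + k) (fun t => d * t) x₁,
          -d * |x₁ - y| - a * y ^ 2 + b * y + k ≤
            -d * |x₁ - x₂| - a * x₂ ^ 2 + b * x₂ + k))
    ↔ ((∀ y : ℝ, 0 ≤ y →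
          -d * |x₂ - y| - a * y ^ 2 + b * y + k ≤
            -d * |x₂ - x₁| - a * x₁ ^ 2 + b * x₁ + k) ∧
        (∀ y : ℝ, 0 ≤ y →
          -d * |x₁ - y| - a * y ^ 2 + b * y + k ≤
            -d * |x₁ - x₂| - a * x₂ ^ 2 + b * x₂ + k))) := by
  have hs : 0 ≤ b / (2 * a) := div_nonneg (hd0.le.trans hdb) (by positivity)
  have hdeferral := isEquilibriumOn_iff (k := k)
    (S := maxSetR (fun x => -a * x ^ 2 + b * x + k) (fun t => d * t)) ha hd0 (fun r hr => by
      rw [maxSetR_eq_uIcc (quadratic_strictMonoOn_Iic ha) (quadratic_strictAntiOn_Ici ha)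
        (strictMono_mul_left_of_pos hd0) hr hs]
      exact ⟨left_mem_uIcc, subset_rfl⟩) h₁ h₂
  have hstandard := isEquilibriumOn_iff (k := k) (S := fun _ => Ici 0) ha hd0
    (fun r hr => ⟨hr, fun _ hy => (le_min hr hs).trans hy.1⟩) h₁ h₂
  refine ⟨hdeferral, hdeferral.trans (hstandard.symm.trans ?_)⟩
  exact ⟨fun h => ⟨h.1.2, h.2.2⟩, fun h => ⟨⟨h₁, h.1⟩, ⟨h₂, h.2⟩⟩⟩
end
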